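/- A partition λ is self-conjugate (λ = λ^tr) if and only if its binary word ψ(λ) = (c_k)_{k∈ℤ} satisfies c_{−k−1} = 1 − c_k for all integers k ≥ 0. -/

import Mathlib

open scoped Classical

/-- `p k` is the `(k+1)`-st part `λ_{k+1}` of the partition `λ` :
partitions are encoded by their (eventually zero, antitone) sequence of parts. -/
def IsPartition (p : ℕ → ℕ) : Prop :=
  Antitone p ∧ ∃ N, ∀ i, N ≤ i → p i = 0

/-- The number of (nonzero) parts of a partition. -/
noncomputable def plen (p : ℕ → ℕ) : ℕ := Nat.card {i : ℕ // p i ≠ 0}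

/-- The number of boxes `|λ|` of a partition. -/
noncomputable def psize (p : ℕ → ℕ) : ℕ := ∑ i ∈ Finset.range (plen p), p i

/-- The conjugate partition : `pconj p j = λ^tr_{j+1}`. -/
noncomputable def pconj (p : ℕ → ℕ) (j : ℕ) : ℕ := Nat.card {i : ℕ // j + 1 ≤ p i}

/-- The size of the Durfee square of a partition. -/
noncomputable def durfee (p : ℕ → ℕ) : ℕ := Nat.card {i : ℕ // i + 1 ≤ p i}

/-- The cells (boxes) of the Young diagram, `0`-indexed : `(i, j)` is the box in
row `i+1` and column `j+1`. -/
noncomputable def cells (p : ℕ → ℕ) : Finset (ℕ × ℕ) :=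
  (Finset.range (plen p) ×ˢ Finset.range (p 0)).filter fun s => s.2 < p s.1

/-- The hook length of the (0-indexed) box `(i, j)` :
`h = λ_{i+1} - (j+1) + λ^tr_{j+1} - (i+1) + 1`. -/
noncomputable def hookLen (p : ℕ → ℕ) (i j : ℕ) : ℕ :=
  (p i - j) + (pconj p j - i) - 1

/-- The multiset of hook lengths `ℋ(λ)`. -/
noncomputable def hooks (p : ℕ → ℕ) : Multiset ℕ :=
  (cells p).val.map fun s => hookLen p s.1 s.2

/-- The multiset of hook lengths of the boxes strictly above the main diagonal. -/
noncomputable def hooksAbove (p : ℕ → ℕ) : Multiset ℕ :=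
  ((cells p).filter fun s => s.1 < s.2).val.map fun s => hookLen p s.1 s.2

/-- The multiset of hook lengths of the boxes strictly below the main diagonal. -/
noncomputable def hooksBelow (p : ℕ → ℕ) : Multiset ℕ :=
  ((cells p).filter fun s => s.2 < s.1).val.map fun s => hookLen p s.1 s.2

/-- `p` is an `n`-core : no hook length is equal to `n`. -/
def IsCore (n : ℕ) (p : ℕ → ℕ) : Prop := n ∉ hooks p

/-- Self-conjugate partitions. -/
def SelfConj (p : ℕ → ℕ) : Prop := p = pconj p

/-- Distinct partitions (strictly decreasing nonzero parts). -/
def IsDistinct (p : ℕ → ℕ) : Prop := ∀ i, p (i + 1) ≠ 0 → p (i + 1) < p i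

/-- Doubled distinct partitions : `λ_i = λ^tr_i + 1` for `i` at most
the size of the Durfee square. -/
def IsDD (p : ℕ → ℕ) : Prop := ∀ i < durfee p, p i = pconj p i + 1

/-- Conjugates of doubled distinct partitions. -/
def IsDDtr (p : ℕ → ℕ) : Prop := ∃ q, IsPartition q ∧ IsDD q ∧ p = pconj q

/-- The doubled distinct partition `λ̄λ̄` of a distinct partition `λ̄` :
add `λ̄_i` boxes to the `i`-th column of the shifted Young diagram of `λ̄`. -/
noncomputable def double (b : ℕ → ℕ) : ℕ → ℕ := fun i =>
  if i < plen b then b i + (i + 1)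
  else Nat.card {j : ℕ // j < plen b ∧ i + 1 ≤ b j + j}

/-- The self-conjugate partition associated with a distinct partition `λ̄` :
add `λ̄_i - 1` boxes to the `i`-th column of the shifted Young diagram of `λ̄`. -/
noncomputable def scOf (b : ℕ → ℕ) : ℕ → ℕ := fun i =>
  if i < plen b then b i + i
  else Nat.card {j : ℕ // j < plen b ∧ i + 1 ≤ b j + j}

/-- The binary word `ψ(λ) = (c_k)_{k ∈ ℤ}` of a partition :
`c_k = 0` iff `k ∈ {λ_i - i : i ≥ 1}` and `c_k = 1` otherwise
(i.e. iff `k ∈ {j - λ^tr_j - 1 : j ≥ 1}`). -/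
noncomputable def word (p : ℕ → ℕ) (k : ℤ) : ℕ :=
  if ∃ m : ℕ, k = (p m : ℤ) - ((m : ℤ) + 1) then 0 else 1

/-- The `g`-charge of a `g`-core : `m_i = min {k ∈ ℤ : c_{kg+i} = 1}`. -/
noncomputable def ncharge (g : ℕ) (p : ℕ → ℕ) (i : ℕ) : ℤ :=
  sInf {k : ℤ | word p (k * (g : ℤ) + (i : ℤ)) = 1}

/-- The subword of residue `k` modulo `g` of the word of `p`. -/
noncomputable def subword (g k : ℕ) (p : ℕ → ℕ) (i : ℤ) : ℕ :=
  word p ((g : ℤ) * i + (k : ℤ))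

/-- The shift turning the subword of residue `k` into a balanced partition word. -/
noncomputable def qcharge (g : ℕ) (p : ℕ → ℕ) (k : ℕ) : ℤ :=
  (Nat.card {i : ℕ // subword g k p (i : ℤ) = 0} : ℤ) -
    (Nat.card {i : ℕ // subword g k p (-((i : ℤ) + 1)) = 1} : ℤ)

/-- `ν` is the `k`-th component of the `g`-quotient of `p` : its word is the
subword of residue `k` of the word of `p`, reindexed so as to be balanced. -/
def IsQuotientAt (g : ℕ) (p : ℕ → ℕ) (k : ℕ) (ν : ℕ → ℕ) : Prop :=
  ∀ i : ℤ, word ν i = subword g k p (i + qcharge g p k)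

/-- `ω` is the `g`-core of `p` : every subword of its word is sorted
(all `0`'s, then all `1`'s), with transition index the charge of `p`. -/
def IsCoreOf (g : ℕ) (p ω : ℕ → ℕ) : Prop :=
  ∀ k < g, ∀ i : ℤ, (subword g k ω i = 1 ↔ qcharge g p k ≤ i)

/-- `(ω, ν)` is the Littlewood decomposition of `p` for the modulus `g`. -/
def IsLittlewood (g : ℕ) (p ω : ℕ → ℕ) (ν : ℕ → ℕ → ℕ) : Prop :=
  IsCoreOf g p ω ∧ ∀ k < g, IsQuotientAt g p k (ν k)

/-- The number `a_r` of boxes of residue `r` modulo `g`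
(the residue of the box `(i, j)` -- `0`-indexed -- being `(j - i) mod g`). -/
noncomputable def resCount (g : ℕ) (p : ℕ → ℕ) (r : ℕ) : ℕ :=
  ((cells p).filter fun s => ((s.2 : ℤ) - (s.1 : ℤ)) % (g : ℤ) = (r : ℤ)).card

/-- The rectangular partition with `r` rows of length `c`. -/
def rect (r c : ℕ) : ℕ → ℕ := fun i => if i < r then c else 0

/-- The statistic `m = max({1} ∪ {(g + λ̄_i)/g : λ̄_i ≡ 0 (mod g)})`. -/
noncomputable def mStat (g : ℕ) (b : ℕ → ℕ) : ℕ :=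
  sSup ({1} ∪ {k : ℕ | ∃ i < plen b, g ∣ b i ∧ k = (g + b i) / g})

/-- The statistic `m' = max({0} ∪ {λ̄_i/g : λ̄_i ≡ g/2 (mod g)})`. -/
noncomputable def mStat' (g : ℕ) (b : ℕ → ℕ) : ℕ :=
  sSup ({0} ∪ {k : ℕ | ∃ i < plen b, 2 * (b i % g) = g ∧ k = b i / g})

/-!
The zeros of `ψ(λ)` sit at the positions `λ_i - i` and the ones at `j - λ^tr_j - 1`, and these
two sets partition `ℤ`. Hence reflecting the positions by `k ↦ -k - 1` and exchanging the letters
turns `ψ(λ)` into `ψ(λ^tr)`. Since the zero set of the word determines the partition, `λ = λ^tr`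
exactly when `ψ(λ)` is invariant under this operation.
-/

theorem word_le_one (p : ℕ → ℕ) (x : ℤ) : word p x ≤ 1 := by
  unfold word
  split <;> omega

namespace IsPartition

variable {p : ℕ → ℕ}

theorem exists_apply_le (hp : IsPartition p) (j : ℕ) : ∃ i, p i ≤ j := by
  obtain ⟨N, hN⟩ := hp.2
  exact ⟨N, by rw [hN N le_rfl]; exact j.zero_le⟩

theorem lt_pconj_iff (hp : IsPartition p) {i j : ℕ} : i < pconj p j ↔ j + 1 ≤ p i := by
  obtain ⟨n, hn, hmin⟩ : ∃ n, p n ≤ j ∧ ∀ i < n, j < p i :=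
    ⟨_, Nat.find_spec (hp.exists_apply_le j),
      fun i hi => not_le.mp (Nat.find_min (hp.exists_apply_le j) hi)⟩
  have hset : {i | j + 1 ≤ p i} = Set.Iio n := by
    ext i
    refine ⟨fun (hi : j + 1 ≤ p i) => show i < n from not_le.mp fun hni => ?_, hmin i⟩
    have := hp.1 hni
    omega
  have hcard : pconj p j = n := by
    rw [pconj, ← Set.ncard_Iio_nat n, ← hset, ← Nat.card_coe_set_eq]
    rfl
  rw [hcard]
  exact (Set.ext_iff.mp hset i).symm

theorem pconj_eq_of_forall_lt_of_le (hp : IsPartition p) {j m : ℕ}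
    (hlt : ∀ i < m, j + 1 ≤ p i) (hge : p m ≤ j) : pconj p j = m := by
  refine le_antisymm (not_lt.mp fun h => ?_) (not_lt.mp fun h => ?_)
  · have := hp.lt_pconj_iff.mp h
    omega
  · exact lt_irrefl _ (hp.lt_pconj_iff.mpr (hlt _ h))

theorem antitone_pconj (hp : IsPartition p) : Antitone (pconj p) := fun j j' hjj' =>
  not_lt.mp fun h => by
    have := hp.lt_pconj_iff.mp h
    exact lt_irrefl _ ((hp.lt_pconj_iff (i := pconj p j) (j := j)).mpr (by omega))

theorem conj (hp : IsPartition p) : IsPartition (pconj p) :=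
  ⟨hp.antitone_pconj, p 0, fun j hj => Nat.eq_zero_of_not_pos fun h => by
    have := hp.lt_pconj_iff.mp h
    omega⟩

theorem strictAnti_sub_succ (hp : IsPartition p) : StrictAnti fun m : ℕ => (p m : ℤ) - (m + 1) :=
  fun m n hmn => by
    have : p n ≤ p m := hp.1 hmn.le
    show (p n : ℤ) - (n + 1) < p m - (m + 1)
    omega

theorem sub_pconj_ne (hp : IsPartition p) (m j : ℕ) :
    (j : ℤ) - pconj p j ≠ p m - (m + 1) := by
  by_cases h : j + 1 ≤ p m
  · have := hp.lt_pconj_iff.mpr h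
    omega
  · have := mt hp.lt_pconj_iff.mp h
    omega

-- With `m` the first row where `p m - (m + 1)` drops below `x`, column `x + m` has length `m`.
theorem exists_eq_sub_pconj (hp : IsPartition p) {x : ℤ}
    (hx : ∀ m : ℕ, x ≠ p m - (m + 1)) : ∃ j : ℕ, x = j - pconj p j := by
  have hex : ∃ m : ℕ, (p m : ℤ) - (m + 1) < x := by
    obtain ⟨N, hN⟩ := hp.2
    refine ⟨N + (-x).toNat, ?_⟩
    rw [hN _ (Nat.le_add_right _ _)]
    omega
  obtain ⟨m, hm, hbefore⟩ : ∃ m : ℕ, (p m : ℤ) - (m + 1) < x ∧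
      ∀ i < m, x < (p i : ℤ) - (i + 1) :=
    ⟨_, Nat.find_spec hex, fun i hi => lt_of_le_of_ne (not_lt.mp (Nat.find_min hex hi)) (hx i)⟩
  refine ⟨(x + m).toNat, ?_⟩
  rw [hp.pconj_eq_of_forall_lt_of_le (m := m) (fun i hi => ?_) (by omega)]
  · omega
  · have := hbefore (m - 1) (by omega)
    have : p (m - 1) ≤ p i := hp.1 (by omega)
    omega

theorem word_eq_ite (hp : IsPartition p) (x : ℤ) :
    word p x = if ∃ j : ℕ, x = j - pconj p j then 1 else 0 := by
  by_cases h : ∃ m : ℕ, x = p m - (m + 1)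
  · obtain ⟨m, rfl⟩ := h
    rw [word, if_pos ⟨m, rfl⟩, if_neg]
    rintro ⟨j, hj⟩
    exact hp.sub_pconj_ne m j hj.symm
  · rw [word, if_neg h, if_pos (hp.exists_eq_sub_pconj (not_exists.mp h))]

theorem word_pconj (hp : IsPartition p) (x : ℤ) :
    word (pconj p) x = 1 - word p (-x - 1) := by
  have hiff : (∃ m : ℕ, x = pconj p m - (m + 1)) ↔ ∃ j : ℕ, -x - 1 = j - pconj p j :=
    exists_congr fun m => by omega
  rw [word, hp.word_eq_ite]
  split_ifs <;> simp_all

-- The zeros of the word are the values of the strictly decreasing sequence `p m - (m + 1)`,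
-- and a strictly monotone sequence on `ℕ` is determined by its range.
theorem eq_of_word_eq {q : ℕ → ℕ} (hp : IsPartition p) (hq : IsPartition q)
    (h : word p = word q) : p = q := by
  have hrange (r : ℕ → ℕ) :
      Set.range (fun m : ℕ => (r m : ℤ) - (m + 1)) = {x | word r x = 0} := by
    ext x
    simp [word, eq_comm]
  have hr : Set.range (fun m : ℕ => (p m : ℤ) - (m + 1)) =
      Set.range (fun m : ℕ => (q m : ℤ) - (m + 1)) := by
    rw [hrange, hrange, h]
  have hseq := (StrictMono.range_inj (γ := ℤᵒᵈ) hp.strictAnti_sub_succ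
    hq.strictAnti_sub_succ).mp hr
  funext m
  have hm : (p m : ℤ) - (m + 1) = q m - (m + 1) := congrFun hseq m
  omega

end IsPartition

/-- A partition `λ` is self-conjugate if and only if its binary word
`ψ(λ) = (c_k)` satisfies `c_{-k-1} = 1 - c_k` for all integers `k ≥ 0`. -/
theorem self_conjugate_iff_word (p : ℕ → ℕ) (hp : IsPartition p) :
    SelfConj p ↔ ∀ k : ℕ, word p (-(k : ℤ) - 1) = 1 - word p (k : ℤ) := by
  have hword : SelfConj p ↔ word p = word (pconj p) :=
    ⟨congrArg word, hp.eq_of_word_eq hp.conj⟩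
  rw [hword, funext_iff]
  simp only [hp.word_pconj]
  constructor
  · intro h k
    simpa using h (-(k : ℤ) - 1)
  · intro h x
    rcases x with k | k
    · have := h k
      have := word_le_one p k
      have := word_le_one p (-(k : ℤ) - 1)
      simp only [Int.ofNat_eq_natCast]
      omega
    · rw [Int.negSucc_eq, neg_add', neg_sub, sub_sub_cancel_left, neg_neg]
      exact h k
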